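/- arXiv:2411.00343 — 2 statements merged into one kernel-verified Lean document; each statement's English description precedes it below -/
import Mathlib

section
/- For any graph G and any distension Ĝ of G, pw(Ĝ) ≤ pw(G) + 2. -/
open SimpleGraph

/-- `H` is isomorphic to a subgraph of `G`. -/
def Contains {α β : Type} (H : SimpleGraph α) (G : SimpleGraph β) : Prop :=
  ∃ f : α ↪ β, ∀ ⦃u v⦄, H.Adj u v → G.Adj (f u) (f v)

/-- The strong product of two graphs. -/
def StrongProd {α β : Type} (G : SimpleGraph α) (H : SimpleGraph β) :
    SimpleGraph (α × β) where
  Adj x y := x ≠ y ∧ (x.1 = y.1 ∨ G.Adj x.1 y.1) ∧ (x.2 = y.2 ∨ H.Adj x.2 y.2)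
  symm := by
    constructor
    rintro x y ⟨h1, h2, h3⟩
    exact ⟨h1.symm, h2.imp Eq.symm SimpleGraph.Adj.symm, h3.imp Eq.symm SimpleGraph.Adj.symm⟩
  loopless := ⟨fun x h => h.1 rfl⟩

/-- `H` is a minor of `G`, witnessed by disjoint connected branch sets. -/
def IsMinorOf {α β : Type} (H : SimpleGraph α) (G : SimpleGraph β) : Prop :=
  ∃ B : α → Set β,
    (∀ a, (G.induce (B a)).Connected) ∧
    (Pairwise fun a b => Disjoint (B a) (B b)) ∧
    (∀ ⦃a b⦄, H.Adj a b → ∃ x ∈ B a, ∃ y ∈ B b, G.Adj x y)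

/-- A graph is planar iff it has no `K₅` minor and no `K₃,₃` minor (Wagner's theorem). -/
def IsPlanar {α : Type} (G : SimpleGraph α) : Prop :=
  ¬ IsMinorOf (completeGraph (Fin 5)) G ∧
  ¬ IsMinorOf (completeBipartiteGraph (Fin 3) (Fin 3)) G

/-- `G` has a tree-decomposition of width at most `k`. -/
def HasTreewidthLE {α : Type} (G : SimpleGraph α) (k : ℕ) : Prop :=
  ∃ (ι : Type) (T : SimpleGraph ι) (B : ι → Set α),
    T.IsTree ∧
    (∀ ⦃u v⦄, G.Adj u v → ∃ i, u ∈ B i ∧ v ∈ B i) ∧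
    (∀ v, (T.induce {i | v ∈ B i}).Connected) ∧
    (∀ i, (B i).Finite ∧ (B i).ncard ≤ k + 1)

/-- `G` has a path-decomposition of width at most `k`. -/
def HasPathwidthLE {α : Type} (G : SimpleGraph α) (k : ℕ) : Prop :=
  ∃ (m : ℕ) (B : Fin m → Set α),
    (∀ ⦃u v⦄, G.Adj u v → ∃ i, u ∈ B i ∧ v ∈ B i) ∧
    (∀ v, ∃ i, v ∈ B i) ∧
    (∀ v (i j l : Fin m), i ≤ j → j ≤ l → v ∈ B i → v ∈ B l → v ∈ B j) ∧
    (∀ i, (B i).Finite ∧ (B i).ncard ≤ k + 1)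

/-- The quotient of `G` by a family of sets of vertices: vertices are the members of `P`,
two parts being adjacent iff some pair of representatives is adjacent in `G`. -/
def QuotientGraph {α : Type} (G : SimpleGraph α) (P : Set (Set α)) :
    SimpleGraph P where
  Adj A B := A ≠ B ∧ ∃ a ∈ (A : Set α), ∃ b ∈ (B : Set α), G.Adj a b
  symm := by
    constructor
    rintro A B ⟨h1, a, ha, b, hb, hab⟩
    exact ⟨h1.symm, b, hb, a, ha, hab.symm⟩
  loopless := ⟨fun A h => h.1 rfl⟩

/-- A partition of the vertices of `G` is a tree-partition if the quotient graph is
contained in a tree. -/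
def IsTreePartition {α : Type} (G : SimpleGraph α) (P : Set (Set α)) : Prop :=
  Setoid.IsPartition P ∧
  ∃ (ι : Type) (T : SimpleGraph ι), T.IsTree ∧ Contains (QuotientGraph G P) T

/-- A matching: a set of edges of `G`, pairwise not sharing a vertex. -/
def IsMatchingSet {α : Type} (G : SimpleGraph α) (M : Set (Sym2 α)) : Prop :=
  M ⊆ G.edgeSet ∧ M.Pairwise fun e f => ∀ v, v ∈ e → v ∉ f

/-- The parts obtained from a matching: matched pairs and singletons of unmatched vertices. -/
def matchingParts {α : Type} (M : Set (Sym2 α)) : Set (Set α) :=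
  {S | (∃ e ∈ M, S = {x | x ∈ e}) ∨ ∃ v, (∀ e ∈ M, v ∉ e) ∧ S = {v}}

/-- The graph `G/M` obtained by contracting each edge of a matching `M`. -/
def ContractMatching {α : Type} (G : SimpleGraph α) (M : Set (Sym2 α)) :
    SimpleGraph (matchingParts M) :=
  QuotientGraph G (matchingParts M)

/-- A graph is a path graph if it is isomorphic to `pathGraph n` for some `n`. -/
def IsPathGraph {α : Type} (G : SimpleGraph α) : Prop :=
  ∃ n : ℕ, Nonempty (G ≃g SimpleGraph.pathGraph n)

/-- A graph in which every cycle is a triangle. -/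
def IsTriangleForest {α : Type} (G : SimpleGraph α) : Prop :=
  ∀ (v : α) (w : G.Walk v v), w.IsCycle → w.length = 3

/-- `G` is `k`-apex: removing at most `k` vertices leaves a planar graph. -/
def IsKApex {α : Type} (G : SimpleGraph α) (k : ℕ) : Prop :=
  ∃ A : Set α, A.ncard ≤ k ∧ IsPlanar (G.induce Aᶜ)

/-- `G` is an apex-forest: removing at most one vertex leaves a forest. -/
def IsApexForest {α : Type} (G : SimpleGraph α) : Prop :=
  ∃ A : Set α, A.ncard ≤ 1 ∧ (G.induce Aᶜ).IsAcyclic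

/-- `G⁺`: the graph `G` together with one new dominant vertex. -/
def AddDominant {α : Type} (G : SimpleGraph α) : SimpleGraph (Option α) where
  Adj x y := match x, y with
    | some a, some b => G.Adj a b
    | some _, none => True
    | none, some _ => True
    | none, none => False
  symm := ⟨by rintro (_|a) (_|b) h <;> simp_all [SimpleGraph.Adj.symm, adj_symm]⟩
  loopless := ⟨by rintro (_|a) h <;> simp_all⟩

/-- `G'` is a distension of `G`: for each edge `vw` of `G`, a non-empty path, complete
to `{v, w}`, is added, with the added paths disjoint from `G` and from each other. -/
def IsDistension {α β : Type} (G : SimpleGraph α) (G' : SimpleGraph β) : Prop :=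
  ∃ (g : α ↪ β) (f : β → Sym2 α),
    (∀ u v : α, G'.Adj (g u) (g v) ↔ G.Adj u v) ∧
    (∀ w : β, w ∉ Set.range g → f w ∈ G.edgeSet) ∧
    (∀ w : β, w ∉ Set.range g → ∀ v : α, (G'.Adj w (g v) ↔ v ∈ f w)) ∧
    (∀ w w' : β, w ∉ Set.range g → w' ∉ Set.range g → G'.Adj w w' → f w = f w') ∧
    (∀ e ∈ G.edgeSet, {w : β | w ∉ Set.range g ∧ f w = e}.Nonempty ∧
      IsPathGraph (G'.induce {w : β | w ∉ Set.range g ∧ f w = e}))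

/-!
Take a path-decomposition of `G` and, for each edge `e = vw`, a bag `B_i` containing `v` and `w`.
If `p_0, …, p_{n-1}` is the path attached to `e`, insert right after `B_i` the bags
`B_i ∪ {p_t, p_{t+1}}`. Every new vertex lies in at most two consecutive bags, every edge of the
distension lies in some bag, and no bag grows by more than two vertices.
-/

open Set

structure IsPathDecomposition {V ι : Type*} [Preorder ι] (G : SimpleGraph V) (B : ι → Set V) :
    Prop where
  exists_mem_of_adj : ∀ ⦃u v⦄, G.Adj u v → ∃ i, u ∈ B i ∧ v ∈ B i
  exists_mem : ∀ v, ∃ i, v ∈ B i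
  ordConnected : ∀ v, {i | v ∈ B i}.OrdConnected

theorem HasPathwidthLE.exists_isPathDecomposition {V : Type} {G : SimpleGraph V} {k : ℕ}
    (hG : HasPathwidthLE G k) :
    ∃ (m : ℕ) (B : Fin m → Set V), IsPathDecomposition G B ∧ ∀ i, (B i).ncard ≤ k + 1 := by
  obtain ⟨m, B, hadj, hmem, hconv, hwidth⟩ := hG
  exact ⟨m, B, ⟨hadj, hmem, fun v => ⟨fun i hi l hl j hj => hconv v i j l hj.1 hj.2 hi hl⟩⟩,
    fun i => (hwidth i).2⟩

theorem IsPathDecomposition.hasPathwidthLE {V : Type} {ι : Type*} [LinearOrder ι] [Fintype ι]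
    {G : SimpleGraph V} {B : ι → Set V} {k : ℕ} (hB : IsPathDecomposition G B)
    (hwidth : ∀ i, (B i).Finite ∧ (B i).ncard ≤ k + 1) : HasPathwidthLE G k := by
  let φ := Fintype.orderIsoFinOfCardEq ι rfl
  refine ⟨_, B ∘ φ, fun u v huv => ?_, fun v => ?_, fun v i j l hij hjl hi hl => ?_,
    fun i => hwidth _⟩
  · obtain ⟨i, hu, hv⟩ := hB.exists_mem_of_adj huv
    exact ⟨φ.symm i, by simpa using hu, by simpa using hv⟩
  · obtain ⟨i, hi⟩ := hB.exists_mem v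
    exact ⟨φ.symm i, by simpa using hi⟩
  · exact (hB.ordConnected v).out hi hl ⟨φ.monotone hij, φ.monotone hjl⟩

theorem IsPathDecomposition.exists_host {V ι : Type*} [Preorder ι] {G : SimpleGraph V}
    {B : ι → Set V} (hB : IsPathDecomposition G B) :
    ∃ host : Sym2 V → ι, ∀ e ∈ G.edgeSet, ∀ v ∈ e, v ∈ B (host e) := by
  have : ∀ e : Sym2 V, ∃ i, e ∈ G.edgeSet → ∀ v ∈ e, v ∈ B i := by
    refine Sym2.ind fun u v => ?_
    by_cases huv : G.Adj u v
    · obtain ⟨i, hu, hv⟩ := hB.exists_mem_of_adj huv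
      exact ⟨i, fun _ w hw => by rcases Sym2.mem_iff.mp hw with rfl | rfl <;> assumption⟩
    · obtain ⟨i, -⟩ := hB.exists_mem u
      exact ⟨i, fun h => absurd h huv⟩
  choose host hhost using this
  exact ⟨host, hhost⟩

theorem IsPathGraph.exists_injOn_of_induce {V : Type} [Fintype V] {H : SimpleGraph V}
    {s : Set V} (hs : IsPathGraph (H.induce s)) :
    ∃ p : V → ℕ, s.InjOn p ∧ (∀ x ∈ s, ∀ y ∈ s, H.Adj x y → p x + 1 = p y ∨ p y + 1 = p x) ∧
      ∀ x ∈ s, p x < Fintype.card V := by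
  classical
  obtain ⟨n, ⟨φ⟩⟩ := hs
  refine ⟨fun x => if hx : x ∈ s then φ ⟨x, hx⟩ else 0, fun x hx y hy hxy => ?_,
    fun x hx y hy hxy => ?_, fun x hx => ?_⟩
  · simp only [dif_pos hx, dif_pos hy] at hxy
    exact congrArg Subtype.val (φ.injective (Fin.ext hxy))
  · simp only [dif_pos hx, dif_pos hy]
    exact pathGraph_adj.mp (φ.map_adj_iff.mpr hxy)
  · simp only [dif_pos hx]
    calc (φ ⟨x, hx⟩ : ℕ) < n := Fin.is_lt _
      _ = Fintype.card s := by simpa using (Fintype.card_congr φ.toEquiv).symm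
      _ ≤ Fintype.card V := Fintype.card_subtype_le _

theorem exists_pos_of_isPathGraph_fibers {V E : Type} [Fintype V] (H : SimpleGraph V)
    (W : Set V) (lab : V → E)
    (hpath : ∀ w ∈ W, IsPathGraph (H.induce {x | x ∈ W ∧ lab x = lab w})) :
    ∃ pos : V → ℕ, (∀ w ∈ W, ∀ w' ∈ W, lab w = lab w' → pos w = pos w' → w = w') ∧
      (∀ w ∈ W, ∀ w' ∈ W, lab w = lab w' → H.Adj w w' → pos w + 1 = pos w' ∨ pos w' + 1 = pos w) ∧
      ∀ w ∈ W, pos w < Fintype.card V := by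
  have : ∀ e, ∃ p : V → ℕ, {x | x ∈ W ∧ lab x = e}.InjOn p ∧
      (∀ x ∈ W, ∀ y ∈ W, lab x = e → lab y = e → H.Adj x y → p x + 1 = p y ∨ p y + 1 = p x) ∧
      ∀ x ∈ W, lab x = e → p x < Fintype.card V := by
    intro e
    by_cases he : ∃ w ∈ W, lab w = e
    · obtain ⟨w, hw, rfl⟩ := he
      obtain ⟨p, hinj, hadj, hlt⟩ := (hpath w hw).exists_injOn_of_induce
      exact ⟨p, hinj, fun x hx y hy hxe hye => hadj x ⟨hx, hxe⟩ y ⟨hy, hye⟩,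
        fun x hx hxe => hlt x ⟨hx, hxe⟩⟩
    · push Not at he
      exact ⟨0, fun x hx => (he x hx.1 hx.2).elim, fun x hx _ _ hxe => (he x hx hxe).elim,
        fun x hx hxe => (he x hx hxe).elim⟩
  choose p hinj hadj hlt using this
  refine ⟨fun w => p (lab w) w, fun w hw w' hw' hl hp => ?_, fun w hw w' hw' hl hww' => ?_,
    fun w hw => hlt _ w hw rfl⟩
  · exact hinj (lab w) ⟨hw, rfl⟩ ⟨hw', hl.symm⟩ (by simpa only [hl] using hp)
  · simpa only [hl] using hadj (lab w') w hw w' hw' hl rfl hww'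

theorem Prod.Lex.exists_eq_toLex_of_le_of_le {α β : Type*} [PartialOrder α] [Preorder β]
    {a : α} {b₁ b₂ : β} {x : α ×ₗ β} (h₁ : toLex (a, b₁) ≤ x) (h₂ : x ≤ toLex (a, b₂)) :
    ∃ b, x = toLex (a, b) ∧ b₁ ≤ b ∧ b ≤ b₂ := by
  obtain ⟨⟨c, d⟩, rfl⟩ := toLex.surjective x
  rw [Prod.Lex.toLex_le_toLex] at h₁ h₂
  obtain rfl : a = c := le_antisymm (h₁.elim le_of_lt fun h => h.1.le)
    (h₂.elim le_of_lt fun h => h.1.le)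
  simp only [lt_irrefl, false_or, true_and] at h₁ h₂
  exact ⟨d, rfl, h₁, h₂⟩

section AttachPaths

variable {α β ι E : Type*} (g : α ↪ β) (B : ι → Set α)
  (lab : β → E) (pos : β → ℕ) (host : E → ι) (K : ℕ)

/-- Bag `(i, ⊥)` is the image of `B i`; bag `(i, (e, t))` adds the vertices at positions `t` and
`t + 1` of the path labelled `e`, provided that `e` is hosted at `i`. -/
def attachedBag (x : ι ×ₗ WithBot (E ×ₗ Fin K)) : Set β :=
  g '' B (ofLex x).1 ∪ {w | w ∉ range g ∧ ∃ t : Fin K,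
    x = toLex (host (lab w), ↑(toLex (lab w, t))) ∧ (pos w = t ∨ pos w = t + 1)}

variable {g B lab pos host K}

theorem apply_mem_attachedBag_iff (u : α) (x : ι ×ₗ WithBot (E ×ₗ Fin K)) :
    g u ∈ attachedBag g B lab pos host K x ↔ u ∈ B (ofLex x).1 := by
  simp [attachedBag, g.injective.mem_set_image]

theorem mem_attachedBag_iff {w : β} (hw : w ∉ range g) (x : ι ×ₗ WithBot (E ×ₗ Fin K)) :
    w ∈ attachedBag g B lab pos host K x ↔ ∃ t : Fin K,
      x = toLex (host (lab w), ↑(toLex (lab w, t))) ∧ (pos w = t ∨ pos w = t + 1) := by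
  have : w ∉ g '' B (ofLex x).1 := fun ⟨u, _, hu⟩ => hw ⟨u, hu⟩
  simp only [attachedBag, mem_union, this, false_or, mem_ofPred_eq, hw, not_false_eq_true,
    true_and]

variable (B host) in
theorem exists_mem_attachedBag {w : β} (hw : w ∉ range g) (hK : pos w < K) :
    ∃ x, w ∈ attachedBag g B lab pos host K x ∧ (ofLex x).1 = host (lab w) ∧
      ∀ w' ∉ range g, lab w' = lab w → pos w' = pos w + 1 →
        w' ∈ attachedBag g B lab pos host K x := by
  refine ⟨toLex (host (lab w), ↑(toLex (lab w, (⟨pos w, hK⟩ : Fin K)))), ?_, rfl,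
    fun w' hw' hlab hpos => ?_⟩
  · exact (mem_attachedBag_iff hw _).mpr ⟨_, rfl, Or.inl rfl⟩
  · exact (mem_attachedBag_iff hw' _).mpr ⟨_, by rw [hlab], Or.inr hpos⟩

theorem ordConnected_attachedBag [LinearOrder ι] [LinearOrder E] {w : β} (hw : w ∉ range g) :
    {x | w ∈ attachedBag g B lab pos host K x}.OrdConnected := by
  refine ⟨fun x hx z hz y ⟨hxy, hyz⟩ => ?_⟩
  simp only [mem_ofPred_eq, mem_attachedBag_iff hw] at hx hz ⊢
  obtain ⟨t₁, rfl, h₁⟩ := hx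
  obtain ⟨t₃, rfl, h₃⟩ := hz
  obtain ⟨b, rfl, hb₁, hb₃⟩ := Prod.Lex.exists_eq_toLex_of_le_of_le hxy hyz
  obtain ⟨c, rfl, hc₁⟩ := WithBot.coe_le_iff.mp hb₁
  obtain ⟨t, rfl, ht₁, ht₃⟩ :=
    Prod.Lex.exists_eq_toLex_of_le_of_le hc₁ (WithBot.coe_le_coe.mp hb₃)
  exact ⟨t, rfl, by omega⟩

theorem isPathDecomposition_attachedBag [LinearOrder ι] [LinearOrder E] {G : SimpleGraph α}
    {G' : SimpleGraph β} (hB : IsPathDecomposition G B) (hG : ∀ u v, G'.Adj (g u) (g v) → G.Adj u v)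
    (hhost : ∀ w ∉ range g, ∀ u, G'.Adj w (g u) → u ∈ B (host (lab w)))
    (hlab : ∀ w ∉ range g, ∀ w' ∉ range g, G'.Adj w w' → lab w = lab w')
    (hpos : ∀ w ∉ range g, ∀ w' ∉ range g, lab w = lab w' → G'.Adj w w' →
      pos w + 1 = pos w' ∨ pos w' + 1 = pos w)
    (hK : ∀ w ∉ range g, pos w < K) :
    IsPathDecomposition G' (attachedBag g B lab pos host K) where
  exists_mem_of_adj := by
    have hpath : ∀ w ∉ range g, ∀ u, G'.Adj w (g u) →
        ∃ x, w ∈ attachedBag g B lab pos host K x ∧ g u ∈ attachedBag g B lab pos host K x := by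
      intro w hw u hwu
      obtain ⟨x, hwx, hx, -⟩ := exists_mem_attachedBag B host hw (hK w hw)
      exact ⟨x, hwx, (apply_mem_attachedBag_iff u x).mpr (hx ▸ hhost w hw u hwu)⟩
    intro v v' hvv'
    by_cases hv : v ∈ range g <;> by_cases hv' : v' ∈ range g
    · obtain ⟨u, rfl⟩ := hv
      obtain ⟨u', rfl⟩ := hv'
      obtain ⟨i, hu, hu'⟩ := hB.exists_mem_of_adj (hG u u' hvv')
      exact ⟨toLex (i, ⊥), (apply_mem_attachedBag_iff u _).mpr hu,
        (apply_mem_attachedBag_iff u' _).mpr hu'⟩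
    · obtain ⟨u, rfl⟩ := hv
      exact (hpath v' hv' u hvv'.symm).imp fun _ => And.symm
    · obtain ⟨u', rfl⟩ := hv'
      exact hpath v hv u' hvv'
    · have hl := hlab v hv v' hv' hvv'
      rcases hpos v hv v' hv' hl hvv' with h | h
      · obtain ⟨x, hvx, -, hnext⟩ := exists_mem_attachedBag B host hv (hK v hv)
        exact ⟨x, hvx, hnext v' hv' hl.symm h.symm⟩
      · obtain ⟨x, hvx, -, hnext⟩ := exists_mem_attachedBag B host hv' (hK v' hv')
        exact ⟨x, hnext v hv hl h.symm, hvx⟩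
  exists_mem v := by
    by_cases hv : v ∈ range g
    · obtain ⟨u, rfl⟩ := hv
      obtain ⟨i, hi⟩ := hB.exists_mem u
      exact ⟨toLex (i, ⊥), (apply_mem_attachedBag_iff u _).mpr hi⟩
    · obtain ⟨x, hx, -⟩ := exists_mem_attachedBag B host hv (hK v hv)
      exact ⟨x, hx⟩
  ordConnected v := by
    by_cases hv : v ∈ range g
    · obtain ⟨u, rfl⟩ := hv
      simp only [apply_mem_attachedBag_iff]
      exact (hB.ordConnected u).preimage_mono Prod.Lex.monotone_fst_ofLex
    · exact ordConnected_attachedBag hv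

theorem ncard_attachedBag_le [Finite β]
    (hinj : ∀ w ∉ range g, ∀ w' ∉ range g, lab w = lab w' → pos w = pos w' → w = w')
    (x : ι ×ₗ WithBot (E ×ₗ Fin K)) :
    (attachedBag g B lab pos host K x).ncard ≤ (B (ofLex x).1).ncard + 2 := by
  obtain ⟨⟨i, y⟩, rfl⟩ := toLex.surjective x
  have hpoint : ∀ e (j : ℕ), {w | w ∉ range g ∧ lab w = e ∧ pos w = j}.ncard ≤ 1 :=
    fun e j => ncard_le_one_iff_subsingleton.mpr fun w hw w' hw' =>
      hinj w hw.1 w' hw'.1 (hw.2.1.trans hw'.2.1.symm) (hw.2.2.trans hw'.2.2.symm)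
  have hnew : {w | w ∉ range g ∧ ∃ t : Fin K, toLex (i, y) =
      toLex (host (lab w), ↑(toLex (lab w, t))) ∧ (pos w = t ∨ pos w = t + 1)}.ncard ≤ 2 := by
    induction y using WithBot.recBotCoe with
    | bot => simp
    | coe y =>
      obtain ⟨⟨e, t⟩, rfl⟩ := toLex.surjective y
      refine (ncard_le_ncard (t := {w | w ∉ range g ∧ lab w = e ∧ pos w = t} ∪
        {w | w ∉ range g ∧ lab w = e ∧ pos w = t + 1}) ?_).trans <|
          (ncard_union_le _ _).trans (add_le_add (hpoint _ _) (hpoint _ _))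
      rintro w ⟨hw, t', heq, ht'⟩
      simp only [toLex_inj, Prod.mk.injEq, WithBot.coe_inj] at heq
      obtain ⟨-, rfl, rfl⟩ := heq
      exact ht'.imp (fun h => ⟨hw, rfl, h⟩) fun h => ⟨hw, rfl, h⟩
  calc _ ≤ (g '' B i).ncard + _ := ncard_union_le _ _
    _ ≤ (B i).ncard + 2 := by
      rw [ncard_image_of_injective _ g.injective]
      exact add_le_add_right hnew _

end AttachPaths

/-- For any graph `G` and any distension `G'` of `G`, `pw(G') ≤ pw(G) + 2`. -/
theorem stmt15 {α β : Type} [Fintype α] [Fintype β]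
    (G : SimpleGraph α) (G' : SimpleGraph β) (h : IsDistension G G')
    (k : ℕ) (hk : HasPathwidthLE G k) : HasPathwidthLE G' (k + 2) := by
  classical
  obtain ⟨g, f, hgg, hfE, hadj, hww, hpath⟩ := h
  obtain ⟨m, B, hB, hwidth⟩ := hk.exists_isPathDecomposition
  obtain ⟨host, hhost⟩ := hB.exists_host
  obtain ⟨pos, hinj, hpos, hK⟩ := exists_pos_of_isPathGraph_fibers G' (range g)ᶜ f
    fun w hw => (hpath (f w) (hfE w hw)).2
  let : LinearOrder (Sym2 α) := LinearOrder.lift' _ (Fintype.equivFin (Sym2 α)).injective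
  have hD := isPathDecomposition_attachedBag hB (fun u v => (hgg u v).mp)
    (fun w hw u hwu => hhost _ (hfE w hw) u ((hadj w hw u).mp hwu))
    (fun w hw w' hw' => hww w w' hw hw') hpos hK
  refine hD.hasPathwidthLE fun x => ⟨toFinite _, ?_⟩
  calc _ ≤ (B (ofLex x).1).ncard + 2 := ncard_attachedBag_le hinj x
    _ ≤ k + 1 + 2 := by grw [hwidth]
end

section
/- Every distension of a planar graph is planar. -/
open SimpleGraph

/-! A minor model of `K₅` or `K₃,₃` in a distension of `G` either has a vertex of `G` in every
branch set, and then restricting the branch sets to `G` gives a model in `G` (a walk that enters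
the path of an edge `uv` leaves it at `u` or `v`); or some branch set lies inside the path of an
edge `uv`. In the second case take such a branch set reaching lowest on that path. A branch set
containing the vertex just below it is not inside the path, so it contains `u` or `v`; hence
every branch set adjacent to it contains `u`, `v` or the vertex just above it, which contradicts
degree `4` in `K₅`. In `K₃,₃` one of its neighbours contains neither `u` nor `v`, so it lies
inside the path too, and now all six branch sets meet a set of five vertices. -/

structure IsMinorModel {ι β : Type} (H : SimpleGraph ι) (G : SimpleGraph β) (B : ι → Set β) :
    Prop where
  connected : ∀ i, (G.induce (B i)).Connected
  disjoint : Pairwise fun i j => Disjoint (B i) (B j)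
  exists_adj : ∀ ⦃i j⦄, H.Adj i j → ∃ x ∈ B i, ∃ y ∈ B j, G.Adj x y

theorem isMinorOf_iff_exists_isMinorModel {ι β : Type} {H : SimpleGraph ι} {G : SimpleGraph β} :
    IsMinorOf H G ↔ ∃ B, IsMinorModel H G B :=
  ⟨fun ⟨B, h₁, h₂, h₃⟩ => ⟨B, h₁, h₂, h₃⟩, fun ⟨B, h₁, h₂, h₃⟩ => ⟨B, h₁, h₂, h₃⟩⟩

theorem Finset.card_le_card_of_forall_exists_mem {ι β : Type} {B : ι → Set β}
    (hB : Pairwise fun i j => Disjoint (B i) (B j)) {J : Finset ι} {S : Finset β}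
    (h : ∀ j ∈ J, ∃ s ∈ S, s ∈ B j) : J.card ≤ S.card := by
  rcases J.eq_empty_or_nonempty with rfl | ⟨j, hj⟩
  · simp
  obtain ⟨s, -, -⟩ := h j hj
  have : Nonempty β := ⟨s⟩
  choose! t htS htC using h
  refine Finset.card_le_card_of_injOn t htS fun i hi j hj hij => ?_
  by_contra hne
  exact Set.disjoint_left.mp (hB hne) (htC i hi) (hij ▸ htC j hj)

namespace SimpleGraph

variable {V V' : Type} {W : SimpleGraph V}

theorem Connected.subset_of_forall_adj_mem {C S : Set V} (hC : (W.induce C).Connected)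
    {a : V} (haC : a ∈ C) (haS : a ∈ S) (hS : ∀ x ∈ C, ∀ z ∈ C, x ∈ S → W.Adj x z → z ∈ S) :
    C ⊆ S := by
  intro b hb
  obtain ⟨p⟩ := hC.preconnected ⟨a, haC⟩ ⟨b, hb⟩
  suffices ∀ {x y : C}, (W.induce C).Walk x y → (x : V) ∈ S → (y : V) ∈ S from this p haS
  intro x y p
  induction p with
  | nil => exact id
  | cons hxz _ ih => exact fun hx => ih (hS _ (Subtype.prop _) _ (Subtype.prop _) hx hxz)

theorem Reachable.map_of_eq_or_adj {W' : SimpleGraph V'} (ρ : V → V')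
    (hρ : ∀ x z, W.Adj x z → ρ x = ρ z ∨ W'.Adj (ρ x) (ρ z)) {x y : V} (h : W.Reachable x y) :
    W'.Reachable (ρ x) (ρ y) := by
  rw [reachable_iff_reflTransGen] at h ⊢
  refine Relation.ReflTransGen.lift' ρ (fun a b hab => ?_) x y h
  rcases hρ a b hab with heq | hadj
  · change Relation.ReflTransGen W'.Adj (ρ a) (ρ b)
    exact heq ▸ .refl
  · exact Relation.ReflTransGen.single hadj

theorem eq_or_adj_of_mem_of_mem {e : Sym2 V} (he : e ∈ W.edgeSet) {a b : V} (ha : a ∈ e)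
    (hb : b ∈ e) : a = b ∨ W.Adj a b := by
  by_cases hab : a = b
  · exact Or.inl hab
  · rw [(Sym2.mem_and_mem_iff hab).mp ⟨ha, hb⟩] at he
    exact Or.inr he

theorem completeBipartiteGraph_adj_or_adj {i d : V ⊕ V'}
    (hid : (completeBipartiteGraph V V').Adj i d) (k : V ⊕ V') :
    (completeBipartiteGraph V V').Adj i k ∨ (completeBipartiteGraph V V').Adj d k := by
  rcases i with i | i <;> rcases d with d | d <;> rcases k with k | k <;> simp_all

end SimpleGraph

open SimpleGraph

structure IsPathCoord {V : Type} (W : SimpleGraph V) (P : Set V) (c : V → ℕ) : Prop where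
  injOn : Set.InjOn c P
  adj : ∀ ⦃x⦄, x ∈ P → ∀ ⦃z⦄, z ∈ P → W.Adj x z → c z = c x + 1 ∨ c x = c z + 1

theorem IsPathGraph.exists_isPathCoord {V : Type} {W : SimpleGraph V} {P : Set V}
    (h : IsPathGraph (W.induce P)) : ∃ c, IsPathCoord W P c := by
  classical
  obtain ⟨n, ⟨φ⟩⟩ := h
  refine ⟨fun z => if hz : z ∈ P then φ ⟨z, hz⟩ else 0, fun x hx z hz hxz => ?_,
    fun x hx z hz hxz => ?_⟩
  · simp only [dif_pos hx, dif_pos hz] at hxz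
    exact congrArg Subtype.val (φ.injective (Fin.ext hxz))
  · have := pathGraph_adj.mp (φ.map_adj_iff.mpr (show (W.induce P).Adj ⟨x, hx⟩ ⟨z, hz⟩ from hxz))
    simp only [dif_pos hx, dif_pos hz]
    omega

namespace IsPathCoord

variable {V : Type} {W : SimpleGraph V} {P C : Set V} {c : V → ℕ}

theorem exists_mem_eq (hc : IsPathCoord W P c) (hCP : C ⊆ P) (hconn : (W.induce C).Connected)
    {x y : V} (hx : x ∈ C) (hy : y ∈ C) {k : ℕ} (hxk : c x ≤ k)
    (hky : k ≤ c y) : ∃ w ∈ C, c w = k := by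
  obtain ⟨p⟩ := hconn.preconnected ⟨x, hx⟩ ⟨y, hy⟩
  suffices ∀ {a b : C}, (W.induce C).Walk a b → c a ≤ k → k ≤ c b → ∃ w ∈ C, c w = k from
    this p hxk hky
  intro a b p
  induction p with
  | nil => exact fun h₁ h₂ => ⟨_, Subtype.prop _, le_antisymm h₁ h₂⟩
  | @cons a b _ hab _ ih =>
    intro h₁ h₂
    rcases h₁.eq_or_lt with h | h
    · exact ⟨a, a.2, h⟩
    · have := hc.adj (hCP a.2) (hCP b.2) hab
      exact ih (by omega) h₂

theorem forall_lt_or_forall_lt_of_adj (hc : IsPathCoord W P c) (hCP : C ⊆ P)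
    (hconn : (W.induce C).Connected) {x z : V} (hx : x ∈ C) (hzP : z ∈ P) (hzC : z ∉ C)
    (hxz : W.Adj x z) : (∀ w ∈ C, c z < c w) ∨ ∀ w ∈ C, c w < c z := by
  have hne : ∀ w ∈ C, c w ≠ c z := fun w hw hwz => hzC (hc.injOn (hCP hw) hzP hwz ▸ hw)
  rcases hc.adj (hCP hx) hzP hxz with h | h
  · refine Or.inr fun w hw => lt_of_not_ge fun hwz => ?_
    obtain ⟨w', hw', hw'z⟩ := hc.exists_mem_eq hCP hconn hx hw (k := c z) (by omega) hwz
    exact hne w' hw' hw'z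
  · refine Or.inl fun w hw => lt_of_not_ge fun hzw => ?_
    obtain ⟨w', hw', hw'z⟩ := hc.exists_mem_eq hCP hconn hw hx (k := c z) hzw (by omega)
    exact hne w' hw' hw'z

/-- `y₁` is the neighbour of `C` just below it on the path, `y₂` the one just above it. -/
theorem exists_frontier (hc : IsPathCoord W P c) (hCP : C ⊆ P)
    (hconn : (W.induce C).Connected) : ∃ y₁ y₂ : V, ∀ x ∈ C, ∀ z ∈ P, z ∉ C → W.Adj x z →
    (z = y₁ ∧ ∀ w ∈ C, c z < c w) ∨ z = y₂ := by
  obtain ⟨⟨x₀, -⟩⟩ := hconn.nonempty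
  have pick : ∀ {s : Set V}, s.Subsingleton → ∃ y, s ⊆ {y} := fun hs =>
    hs.eq_empty_or_singleton.elim (fun h => ⟨x₀, h ▸ Set.empty_subset _⟩) fun ⟨y, h⟩ => ⟨y, h.le⟩
  obtain ⟨y₁, hy₁⟩ := pick (s := {z | z ∈ P ∧ (∃ x ∈ C, W.Adj x z) ∧ ∀ w ∈ C, c z < c w})
    fun z ⟨hz, ⟨x, hx, hxz⟩, h⟩ z' ⟨hz', ⟨x', hx', hxz'⟩, h'⟩ => by
      have := h x hx; have := h x' hx'; have := h' x hx; have := h' x' hx'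
      have := hc.adj (hCP hx) hz hxz; have := hc.adj (hCP hx') hz' hxz'
      exact hc.injOn hz hz' (by omega)
  obtain ⟨y₂, hy₂⟩ := pick (s := {z | z ∈ P ∧ (∃ x ∈ C, W.Adj x z) ∧ ∀ w ∈ C, c w < c z})
    fun z ⟨hz, ⟨x, hx, hxz⟩, h⟩ z' ⟨hz', ⟨x', hx', hxz'⟩, h'⟩ => by
      have := h x hx; have := h x' hx'; have := h' x hx; have := h' x' hx'
      have := hc.adj (hCP hx) hz hxz; have := hc.adj (hCP hx') hz' hxz'
      exact hc.injOn hz hz' (by omega)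
  refine ⟨y₁, y₂, fun x hx z hzP hzC hxz => ?_⟩
  rcases hc.forall_lt_or_forall_lt_of_adj hCP hconn hx hzP hzC hxz with h | h
  · exact Or.inl ⟨hy₁ ⟨hzP, ⟨x, hx, hxz⟩, h⟩, h⟩
  · exact Or.inr (hy₂ ⟨hzP, ⟨x, hx, hxz⟩, h⟩)

end IsPathCoord

/-- The data of `IsDistension`: the new vertices are those outside `range emb`, and `label w` is
the edge of `G` whose path contains the new vertex `w`. -/
structure Distension {α β : Type} (G : SimpleGraph α) (G' : SimpleGraph β) where
  emb : α ↪ β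
  label : β → Sym2 α
  adj_emb_iff : ∀ u v, G'.Adj (emb u) (emb v) ↔ G.Adj u v
  label_mem_edgeSet : ∀ w ∉ Set.range emb, label w ∈ G.edgeSet
  adj_emb_iff_mem_label : ∀ w ∉ Set.range emb, ∀ v, G'.Adj w (emb v) ↔ v ∈ label w
  label_eq_of_adj : ∀ w w', w ∉ Set.range emb → w' ∉ Set.range emb → G'.Adj w w' →
    label w = label w'
  isPathGraph : ∀ e ∈ G.edgeSet, IsPathGraph (G'.induce {w | w ∉ Set.range emb ∧ label w = e})

namespace Distension

variable {α β ι : Type} {G : SimpleGraph α} {G' : SimpleGraph β} (D : Distension G G')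
  {H : SimpleGraph ι} {C : Set β} {e : Sym2 α} {x z : β}

def path (e : Sym2 α) : Set β := {w | w ∉ Set.range D.emb ∧ D.label w = e}

def IsAnchor (x : β) (a : α) : Prop := x = D.emb a ∨ (x ∉ Set.range D.emb ∧ a ∈ D.label x)

theorem emb_notMem_path (a : α) (e : Sym2 α) : D.emb a ∉ D.path e := fun h => h.1 ⟨a, rfl⟩

theorem mem_edgeSet_of_mem_path (hx : x ∈ D.path e) : e ∈ G.edgeSet :=
  hx.2 ▸ D.label_mem_edgeSet x hx.1

theorem exists_isPathCoord_of_mem_path (hx : x ∈ D.path e) : ∃ c, IsPathCoord G' (D.path e) c :=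
  (D.isPathGraph e (D.mem_edgeSet_of_mem_path hx)).exists_isPathCoord

theorem mem_path_or_exists_eq_emb_of_adj (hx : x ∈ D.path e) (hxz : G'.Adj x z) :
    z ∈ D.path e ∨ ∃ w ∈ e, z = D.emb w := by
  by_cases hz : z ∈ Set.range D.emb
  · obtain ⟨w, rfl⟩ := hz
    exact Or.inr ⟨w, hx.2 ▸ (D.adj_emb_iff_mem_label x hx.1 w).mp hxz, rfl⟩
  · exact Or.inl ⟨hz, (D.label_eq_of_adj x z hx.1 hz hxz).symm.trans hx.2⟩

theorem subset_path_of_forall_emb_notMem (hconn : (G'.induce C).Connected) (hx : x ∈ C)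
    (hxe : x ∈ D.path e) (hC : ∀ w ∈ e, D.emb w ∉ C) : C ⊆ D.path e :=
  hconn.subset_of_forall_adj_mem hx hxe fun _ _ _ hz hx' hxz =>
    (D.mem_path_or_exists_eq_emb_of_adj hx' hxz).resolve_right fun ⟨w, hw, hwz⟩ =>
      hC w hw (hwz ▸ hz)

theorem exists_emb_mem_of_mem_path (hconn : (G'.induce C).Connected) (hx : x ∈ C)
    (hxe : x ∈ D.path e) {u : α} (hu : D.emb u ∈ C) : ∃ w ∈ e, D.emb w ∈ C := by
  by_contra! h
  exact D.emb_notMem_path u e (D.subset_path_of_forall_emb_notMem hconn hx hxe h hu)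

theorem exists_isAnchor (hconn : (G'.induce C).Connected) {u : α} (hu : D.emb u ∈ C)
    (hx : x ∈ C) : ∃ a, D.emb a ∈ C ∧ D.IsAnchor x a := by
  by_cases hxr : x ∈ Set.range D.emb
  · obtain ⟨a, rfl⟩ := hxr
    exact ⟨a, hx, Or.inl rfl⟩
  · obtain ⟨a, ha, haC⟩ := D.exists_emb_mem_of_mem_path hconn hx ⟨hxr, rfl⟩ hu
    exact ⟨a, haC, Or.inr ⟨hxr, ha⟩⟩

theorem eq_of_isAnchor_emb {a b : α} (h : D.IsAnchor (D.emb a) b) : b = a := by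
  rcases h with h | ⟨h, -⟩
  · exact (D.emb.injective h).symm
  · exact (h ⟨a, rfl⟩).elim

theorem eq_or_adj_of_isAnchor {a b : α} (hxz : G'.Adj x z) (hx : D.IsAnchor x a)
    (hz : D.IsAnchor z b) : a = b ∨ G.Adj a b := by
  rcases hx with rfl | ⟨hx, ha⟩ <;> rcases hz with rfl | ⟨hz, hb⟩
  · exact Or.inr ((D.adj_emb_iff a b).mp hxz)
  · exact eq_or_adj_of_mem_of_mem (D.label_mem_edgeSet z hz)
      ((D.adj_emb_iff_mem_label z hz a).mp hxz.symm) hb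
  · exact eq_or_adj_of_mem_of_mem (D.label_mem_edgeSet x hx) ha
      ((D.adj_emb_iff_mem_label x hx b).mp hxz)
  · exact eq_or_adj_of_mem_of_mem (D.label_mem_edgeSet x hx) ha
      (D.label_eq_of_adj x z hx hz hxz ▸ hb)

theorem isMinorOf_of_forall_exists_emb_mem {B : ι → Set β} (hB : IsMinorModel H G' B)
    (hgr : ∀ i, ∃ u, D.emb u ∈ B i) : IsMinorOf H G := by
  choose ρ hρB hρ using fun i (x : B i) => D.exists_isAnchor (hB.connected i)
    (hgr i).choose_spec x.2
  refine ⟨fun i => D.emb ⁻¹' B i, fun i => ?_, fun i j hij => (hB.disjoint hij).preimage _,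
    fun i j hij => ?_⟩
  · obtain ⟨u, hu⟩ := hgr i
    refine (connected_iff _).mpr ⟨fun a b => ?_, ⟨⟨u, hu⟩⟩⟩
    have := ((hB.connected i).preconnected ⟨_, a.2⟩ ⟨_, b.2⟩).map_of_eq_or_adj
      (W' := G.induce (D.emb ⁻¹' B i)) (fun x => ⟨ρ i x, hρB i x⟩) fun x z hxz =>
        (D.eq_or_adj_of_isAnchor hxz (hρ i x) (hρ i z)).imp Subtype.ext id
    have hρemb : ∀ a : D.emb ⁻¹' B i, (⟨ρ i ⟨_, a.2⟩, hρB i _⟩ : D.emb ⁻¹' B i) = a :=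
      fun a => Subtype.ext (D.eq_of_isAnchor_emb (hρ i ⟨_, a.2⟩))
    rwa [hρemb a, hρemb b] at this
  · obtain ⟨x, hx, z, hz, hxz⟩ := hB.exists_adj hij
    refine ⟨ρ i ⟨x, hx⟩, hρB i _, ρ j ⟨z, hz⟩, hρB j _,
      (D.eq_or_adj_of_isAnchor hxz (hρ i ⟨x, hx⟩) (hρ j ⟨z, hz⟩)).resolve_left fun h => ?_⟩
    exact Set.disjoint_left.mp (hB.disjoint hij.ne) (hρB i _) (h ▸ hρB j _)

theorem exists_frontier (hconn : (G'.induce C).Connected) {u v : α}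
    (hCP : C ⊆ D.path s(u, v)) : ∃ y₁ y₂, ∀ x ∈ C, ∀ z ∉ C, G'.Adj x z →
      z = D.emb u ∨ z = D.emb v ∨ z = y₁ ∨ z = y₂ := by
  obtain ⟨⟨x₀, hx₀⟩⟩ := hconn.nonempty
  obtain ⟨c, hc⟩ := D.exists_isPathCoord_of_mem_path (hCP hx₀)
  obtain ⟨y₁, y₂, hy⟩ := hc.exists_frontier hCP hconn
  refine ⟨y₁, y₂, fun x hx z hzC hxz => ?_⟩
  rcases D.mem_path_or_exists_eq_emb_of_adj (hCP hx) hxz with hzP | ⟨w, hw, rfl⟩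
  · rcases hy x hx z hzP hzC hxz with ⟨h, -⟩ | h
    · exact Or.inr (Or.inr (Or.inl h))
    · exact Or.inr (Or.inr (Or.inr h))
  · rcases Sym2.mem_iff.mp hw with rfl | rfl
    · exact Or.inl rfl
    · exact Or.inr (Or.inl rfl)

theorem exists_cover_of_exists_forall_emb_notMem {B : ι → Set β} (hB : IsMinorModel H G' B)
    (hfl : ∃ i, ∀ a, D.emb a ∉ B i) : ∃ u v i₁ y, B i₁ ⊆ D.path s(u, v) ∧
      ∀ j, H.Adj i₁ j → D.emb u ∈ B j ∨ D.emb v ∈ B j ∨ y ∈ B j := by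
  obtain ⟨i₀, hi₀⟩ := hfl
  obtain ⟨⟨x₀, hx₀⟩⟩ := (hB.connected i₀).nonempty
  obtain ⟨u, v, huv⟩ : ∃ u v, D.label x₀ = s(u, v) :=
    Sym2.ind (f := fun e => ∃ u v, e = s(u, v)) (fun u v => ⟨u, v, rfl⟩) _
  have hx₀P : x₀ ∈ D.path s(u, v) := ⟨by rintro ⟨a, rfl⟩; exact hi₀ a hx₀, huv⟩
  obtain ⟨c, hc⟩ := D.exists_isPathCoord_of_mem_path hx₀P
  let F := {z | z ∈ D.path s(u, v) ∧ ∃ j, z ∈ B j ∧ ∀ a, D.emb a ∉ B j}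
  have hF : x₀ ∈ F := ⟨hx₀P, i₀, hx₀, hi₀⟩
  obtain ⟨hp₀P, i₁, hp₀, hi₁⟩ := Function.argminOn_mem c F ⟨x₀, hF⟩
  have hsub := D.subset_path_of_forall_emb_notMem (hB.connected i₁) hp₀ hp₀P fun w _ => hi₁ w
  obtain ⟨y₁, y₂, hfront⟩ := hc.exists_frontier hsub (hB.connected i₁)
  refine ⟨u, v, i₁, y₂, hsub, fun j hj => ?_⟩
  obtain ⟨x, hx, z, hz, hxz⟩ := hB.exists_adj hj
  have hzC : z ∉ B i₁ := fun h => Set.disjoint_left.mp (hB.disjoint hj.ne) h hz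
  have hendpoint : ∀ w ∈ s(u, v), D.emb w ∈ B j → D.emb u ∈ B j ∨ D.emb v ∈ B j ∨ y₂ ∈ B j :=
    fun w hw hwC => by rcases Sym2.mem_iff.mp hw with rfl | rfl <;> simp [hwC]
  rcases D.mem_path_or_exists_eq_emb_of_adj (hsub hx) hxz with hzP | ⟨w, hw, rfl⟩
  · rcases hfront x hx z hzP hzC hxz with ⟨rfl, hbelow⟩ | rfl
    · -- `z` lies below `B i₁`, so by the choice of `i₁` the branch set `B j` meets `G`
      by_cases hj' : ∀ a, D.emb a ∉ B j
      · exact absurd (Function.argminOn_le c F ⟨hzP, j, hz, hj'⟩) (not_le.mpr (hbelow _ hp₀))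
      · obtain ⟨a, ha⟩ := not_forall_not.mp hj'
        obtain ⟨w, hw, hwC⟩ := D.exists_emb_mem_of_mem_path (hB.connected j) hz hzP ha
        exact hendpoint w hw hwC
    · exact Or.inr (Or.inr hz)
  · exact hendpoint w hw hz

theorem forall_exists_emb_mem_of_completeGraph {B : Fin 5 → Set β}
    (hB : IsMinorModel (completeGraph (Fin 5)) G' B) : ∀ i, ∃ u, D.emb u ∈ B i := by
  classical
  by_contra! hfl
  obtain ⟨u, v, i₁, y, -, hcover⟩ := D.exists_cover_of_exists_forall_emb_notMem hB hfl
  have hcard := Finset.card_le_card_of_forall_exists_mem hB.disjoint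
    (J := Finset.univ.filter ((completeGraph (Fin 5)).Adj i₁)) (S := {D.emb u, D.emb v, y})
    fun j hj => by
      rcases hcover j (Finset.mem_filter.mp hj).2 with h | h | h <;> exact ⟨_, by simp, h⟩
  have hdeg : ∀ i : Fin 5, (Finset.univ.filter ((completeGraph (Fin 5)).Adj i)).card = 4 := by
    decide
  exact absurd (hcard.trans Finset.card_le_three) (by rw [hdeg]; norm_num)

theorem forall_exists_emb_mem_of_completeBipartiteGraph {B : Fin 3 ⊕ Fin 3 → Set β}
    (hB : IsMinorModel (completeBipartiteGraph (Fin 3) (Fin 3)) G' B) :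
    ∀ i, ∃ u, D.emb u ∈ B i := by
  classical
  set K := completeBipartiteGraph (Fin 3) (Fin 3)
  by_contra! hfl
  obtain ⟨u, v, i₁, y, hsub, hcover⟩ := D.exists_cover_of_exists_forall_emb_notMem hB hfl
  obtain ⟨d, hd, hdu, hdv⟩ : ∃ d, K.Adj i₁ d ∧ D.emb u ∉ B d ∧ D.emb v ∉ B d := by
    by_contra! h
    have hcard := Finset.card_le_card_of_forall_exists_mem hB.disjoint
      (J := Finset.univ.filter (K.Adj i₁)) (S := {D.emb u, D.emb v}) fun j hj => by
        by_cases hu : D.emb u ∈ B j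
        · exact ⟨_, by simp, hu⟩
        · exact ⟨_, by simp, h j (Finset.mem_filter.mp hj).2 hu⟩
    have hdeg : ∀ i, (Finset.univ.filter (K.Adj i)).card = 3 := by
      simp only [K, completeBipartiteGraph_adj]
      decide
    exact absurd (hcard.trans Finset.card_le_two) (by rw [hdeg]; norm_num)
  have hdend : ∀ w ∈ s(u, v), D.emb w ∉ B d := fun w hw hwC => by
    rcases Sym2.mem_iff.mp hw with rfl | rfl
    exacts [hdu hwC, hdv hwC]
  obtain ⟨x, hx, z, hz, hxz⟩ := hB.exists_adj hd
  have hzP := (D.mem_path_or_exists_eq_emb_of_adj (hsub hx) hxz).resolve_right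
    fun ⟨w, hw, hwz⟩ => hdend w hw (hwz ▸ hz)
  obtain ⟨y₁, y₂, hfront⟩ := D.exists_frontier (hB.connected d)
    (D.subset_path_of_forall_emb_notMem (hB.connected d) hz hzP hdend)
  have hcard := Finset.card_le_card_of_forall_exists_mem hB.disjoint
    (J := Finset.univ) (S := {D.emb u, D.emb v, y, y₁, y₂}) fun k _ => by
      rcases completeBipartiteGraph_adj_or_adj hd k with hk | hk
      · rcases hcover k hk with h | h | h <;> exact ⟨_, by simp, h⟩
      · obtain ⟨x, hx, z, hz, hxz⟩ := hB.exists_adj hk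
        have hzC : z ∉ B d := fun h => Set.disjoint_left.mp (hB.disjoint hk.ne) h hz
        rcases hfront x hx z hzC hxz with rfl | rfl | rfl | rfl <;> exact ⟨_, by simp, hz⟩
  exact absurd (hcard.trans Finset.card_le_five) (by simp)

theorem isMinorOf_of_isMinorOf (hH : ∀ {B}, IsMinorModel H G' B → ∀ i, ∃ u, D.emb u ∈ B i)
    (h : IsMinorOf H G') : IsMinorOf H G := by
  obtain ⟨B, hB⟩ := isMinorOf_iff_exists_isMinorModel.mp h
  exact D.isMinorOf_of_forall_exists_emb_mem hB (hH hB)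

end Distension

theorem stmt16_general {α β : Type}
    (G : SimpleGraph α) (G' : SimpleGraph β) (h : IsDistension G G')
    (hG : IsPlanar G) : IsPlanar G' := by
  obtain ⟨g, f, h₁, h₂, h₃, h₄, h₅⟩ := h
  let D : Distension G G' := ⟨g, f, h₁, h₂, h₃, h₄, fun e he => (h₅ e he).2⟩
  exact ⟨fun h => hG.1 (D.isMinorOf_of_isMinorOf D.forall_exists_emb_mem_of_completeGraph h),
    fun h => hG.2 (D.isMinorOf_of_isMinorOf D.forall_exists_emb_mem_of_completeBipartiteGraph h)⟩

/-- Every distension of a planar graph is planar. -/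
theorem stmt16 {α β : Type} [Fintype α] [Fintype β]
    (G : SimpleGraph α) (G' : SimpleGraph β) (h : IsDistension G G')
    (hG : IsPlanar G) : IsPlanar G' :=
  stmt16_general G G' h hG
end
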